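/- arXiv:1701.08411 — 4 statements merged into one kernel-verified Lean document; each statement's English description precedes it below -/
import Mathlib

section
/- For each λ ∈ Λ, s,t ∈ T(λ) and i ∈ I one has e_i · c_{st}^λ · e_i = c_{st}^λ if both s,t ∈ T(λ,i), and e_i · c_{st}^λ · e_i = 0 otherwise. Consequently, the set C_i = {c_{st}^λ : s,t ∈ T(λ,i) for some λ ∈ Λ_i} is an F-basis of the F-algebra e_i A e_i (whose identity element is e_i). -/
open scoped Classical

noncomputable section


/-- A cellular algebra over a field `F`, in the sense of Graham–Lehrer: an associative unital
`F`-algebra `A` together with a finite poset `Λ`, finite nonempty index sets `T l`, a basis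
`c l s t` indexed by triples, an `F`-linear anti-automorphism `star` fixing the basis up to
transposition, and structure coefficients `r` satisfying the cellular multiplication rule
modulo the span `A^{>l}` of higher basis elements. -/
structure CellularAlgebra (F : Type*) [Field F] (A : Type*) [Ring A] [Algebra F A]
    (Λ : Type*) [PartialOrder Λ] [Fintype Λ]
    (T : Λ → Type*) [∀ l, Fintype (T l)] [∀ l, Nonempty (T l)] where
  c : (l : Λ) → T l → T l → A
  basis : Module.Basis ((l : Λ) × (T l × T l)) F A
  basis_eq : ∀ (l : Λ) (s t : T l), basis ⟨l, (s, t)⟩ = c l s t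
  star : A →ₗ[F] A
  star_mul : ∀ a b : A, star (a * b) = star b * star a
  star_star : ∀ a : A, star (star a) = a
  star_c : ∀ (l : Λ) (s t : T l), star (c l s t) = c l t s
  r : A → (l : Λ) → T l → T l → F
  cell_mem : ∀ (a : A) (l : Λ) (s t : T l),
    a * c l s t - ∑ u : T l, r a l u s • c l u t ∈
      Submodule.span F {x : A | ∃ μ : Λ, l < μ ∧ ∃ p q : T μ, x = c μ p q}

namespace CellularAlgebra

variable {F : Type*} [Field F] {A : Type*} [Ring A] [Algebra F A]
  {Λ : Type*} [PartialOrder Λ] [Fintype Λ]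
  {T : Λ → Type*} [∀ l, Fintype (T l)] [∀ l, Nonempty (T l)]
  (cd : CellularAlgebra F A Λ T)

/-- The ideal-like subspace `A^{>l}`, the `F`-span of all basis elements of strictly
higher degree. -/
def spanAbove (l : Λ) : Submodule F A :=
  Submodule.span F {x : A | ∃ μ : Λ, l < μ ∧ ∃ p q : T μ, x = cd.c μ p q}

variable {I : Type*} [Fintype I] (e : I → A)

/-- Assumptions (A1)–(A4): a decomposition of `1` into nonzero pairwise orthogonal
idempotents `e i`, fixed by `star`, such that each basis row is absorbed by some `e i`. -/
structure Decomp : Prop where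
  ne_zero : ∀ i, e i ≠ 0
  idem : ∀ i, e i * e i = e i
  orth : ∀ i j, i ≠ j → e i * e j = 0
  sum_eq_one : ∑ i, e i = 1
  star_fix : ∀ i, cd.star (e i) = e i
  exists_idx : ∀ (l : Λ) (t : T l), ∃ i : I, ∀ s : T l, e i * cd.c l t s = cd.c l t s

/-- `T(λ, i)`. -/
def Tset (i : I) (l : Λ) : Set (T l) :=
  {t : T l | ∀ s : T l, e i * cd.c l t s = cd.c l t s}

/-- `Λ_i`. -/
def LambdaSet (i : I) : Set Λ := {l : Λ | (cd.Tset e i l).Nonempty}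

/-- `I_λ`. -/
def Iset (l : Λ) : Set I := {i : I | l ∈ cd.LambdaSet e i}


/-- The corner subspace `e_i A e_i = {x | e i * x = x ∧ x * e i = x}` of `A`. -/
def corner (cA : CellularAlgebra F A Λ T) (e' : I → A) (i : I) : Submodule F A where
  carrier := {x : A | e' i * x = x ∧ x * e' i = x}
  add_mem' := fun ha hb => ⟨by rw [mul_add, ha.1, hb.1], by rw [add_mul, ha.2, hb.2]⟩
  zero_mem' := ⟨mul_zero _, zero_mul _⟩
  smul_mem' := fun r x hx => ⟨by rw [mul_smul_comm, hx.1], by rw [smul_mul_assoc, hx.2]⟩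

/-- `(e_i A e_i)^{>l}`: the span of the cellular basis elements of `e_i A e_i` of strictly
higher degree. -/
def cornerSpanAbove (i : I) (l : Λ) : Submodule F A :=
  Submodule.span F {x : A | ∃ μ : Λ, l < μ ∧
    ∃ p ∈ cd.Tset e i μ, ∃ q ∈ cd.Tset e i μ, x = cd.c μ p q}

/-!
Every basis row `c_{t·}^λ` is absorbed by some `e_j`, and by orthogonality `e_i` kills the row
unless `j = i`, i.e. unless `t ∈ T(λ,i)`. Applying the anti-involution `*`, which fixes `e_i`
and transposes the basis, gives the same dichotomy for right multiplication by `e_i`. Hence the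
compression `x ↦ e_i x e_i`, which is the identity on `e_i A e_i`, sends the cellular basis of
`A` into `C_i ∪ {0}`, so `C_i` spans `e_i A e_i`; it is linearly independent as part of a basis.
-/

theorem linearIndependent_c_subtype (P : (l : Λ) × (T l × T l) → Prop) :
    LinearIndependent F (fun p : {p // P p} => cd.c p.1.1 p.1.2.1 p.1.2.2) := by
  convert cd.basis.linearIndependent.comp Subtype.val Subtype.val_injective using 1
  funext p
  exact (cd.basis_eq _ _ _).symm

section

variable {cd e}

theorem mul_c_eq_zero (hd : cd.Decomp e) {i : I} {l : Λ} {s : T l}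
    (hs : s ∉ cd.Tset e i l) (t : T l) : e i * cd.c l s t = 0 := by
  obtain ⟨j, hj⟩ := hd.exists_idx l s
  have hij : i ≠ j := by
    rintro rfl
    exact hs hj
  rw [← hj t, ← mul_assoc, hd.orth i j hij, zero_mul]

theorem c_mul_eq_star_mul {f : A} (hf : cd.star f = f) {l : Λ} (s t : T l) :
    cd.c l s t * f = cd.star (f * cd.c l t s) := by
  rw [cd.star_mul, cd.star_c, hf]

theorem c_mul_eq_self {f : A} (hf : cd.star f = f) {l : Λ} {t : T l}
    (ht : ∀ s, f * cd.c l t s = cd.c l t s) (s : T l) : cd.c l s t * f = cd.c l s t := by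
  rw [c_mul_eq_star_mul hf, ht s, cd.star_c]

theorem c_mul_eq_zero (hd : cd.Decomp e) {i : I} {l : Λ} {t : T l}
    (ht : t ∉ cd.Tset e i l) (s : T l) : cd.c l s t * e i = 0 := by
  rw [c_mul_eq_star_mul (hd.star_fix i), mul_c_eq_zero hd ht, map_zero]

theorem mul_c_mul_eq_self (hd : cd.Decomp e) {i : I} {l : Λ} {s t : T l}
    (hs : s ∈ cd.Tset e i l) (ht : t ∈ cd.Tset e i l) :
    e i * cd.c l s t * e i = cd.c l s t := by
  rw [hs t, c_mul_eq_self (hd.star_fix i) ht]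

theorem mul_c_mul_eq_zero (hd : cd.Decomp e) {i : I} {l : Λ} {s t : T l}
    (hst : ¬ (s ∈ cd.Tset e i l ∧ t ∈ cd.Tset e i l)) : e i * cd.c l s t * e i = 0 := by
  by_cases hs : s ∈ cd.Tset e i l
  · rw [hs t, c_mul_eq_zero hd (fun ht => hst ⟨hs, ht⟩)]
  · rw [mul_c_eq_zero hd hs, zero_mul]

theorem span_c_eq_corner (hd : cd.Decomp e) (i : I) :
    Submodule.span F
      (Set.range (fun p : {p : (l : Λ) × (T l × T l) //
          p.2.1 ∈ cd.Tset e i p.1 ∧ p.2.2 ∈ cd.Tset e i p.1} =>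
        cd.c p.1.1 p.1.2.1 p.1.2.2)) = cd.corner e i := by
  apply le_antisymm
  · rw [Submodule.span_le]
    rintro _ ⟨⟨⟨l, s, t⟩, hs, ht⟩, rfl⟩
    exact ⟨hs t, c_mul_eq_self (hd.star_fix i) ht s⟩
  · intro x hx
    have hx_compress : x ∈ (Submodule.span F (Set.range cd.basis)).map
        (LinearMap.mulLeftRight F (e i, e i)) := by
      rw [cd.basis.span_eq]
      exact ⟨x, trivial, by rw [LinearMap.mulLeftRight_apply, hx.1, hx.2]⟩
    refine (Submodule.map_span_le _ _ _).2 ?_ hx_compress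
    rintro _ ⟨⟨l, s, t⟩, rfl⟩
    rw [cd.basis_eq, LinearMap.mulLeftRight_apply]
    by_cases hst : s ∈ cd.Tset e i l ∧ t ∈ cd.Tset e i l
    · rw [mul_c_mul_eq_self hd hst.1 hst.2]
      exact Submodule.subset_span ⟨⟨⟨l, s, t⟩, hst⟩, rfl⟩
    · rw [mul_c_mul_eq_zero hd hst]
      exact zero_mem _

end

/-- `e i * c_{st}^λ * e i` equals `c_{st}^λ` when `s, t ∈ T(λ,i)` and `0`
otherwise; consequently `C_i = {c_{st}^λ : s, t ∈ T(λ,i), λ ∈ Λ_i}` is an `F`-basis of the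
corner algebra `e_i A e_i` (whose identity element is `e i`). -/
theorem statement_2 (hd : cd.Decomp e) (i : I) :
    (∀ (l : Λ) (s t : T l),
      (s ∈ cd.Tset e i l ∧ t ∈ cd.Tset e i l → e i * cd.c l s t * e i = cd.c l s t) ∧
      (¬ (s ∈ cd.Tset e i l ∧ t ∈ cd.Tset e i l) → e i * cd.c l s t * e i = 0)) ∧
    e i ∈ cd.corner e i ∧
    (∀ x ∈ cd.corner e i, e i * x = x ∧ x * e i = x) ∧
    LinearIndependent F
      (fun p : {p : (l : Λ) × (T l × T l) //
          p.2.1 ∈ cd.Tset e i p.1 ∧ p.2.2 ∈ cd.Tset e i p.1} =>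
        cd.c p.1.1 p.1.2.1 p.1.2.2) ∧
    Submodule.span F
      (Set.range (fun p : {p : (l : Λ) × (T l × T l) //
          p.2.1 ∈ cd.Tset e i p.1 ∧ p.2.2 ∈ cd.Tset e i p.1} =>
        cd.c p.1.1 p.1.2.1 p.1.2.2)) = cd.corner e i := by
  refine ⟨fun l s t => ⟨fun hst => mul_c_mul_eq_self hd hst.1 hst.2,
    mul_c_mul_eq_zero hd⟩, ⟨hd.idem i, hd.idem i⟩, fun _ hx => hx,
    cd.linearIndependent_c_subtype _, span_c_eq_corner hd i⟩

end CellularAlgebra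
end
end

section
/- For each i ∈ I, the algebra e_i A e_i is a cellular algebra over F with cellular basis C_i = {c_{st}^λ : s,t ∈ T(λ,i) for some λ ∈ Λ_i}, poset Λ_i (with the order inherited from Λ), and index sets T(λ,i) for λ ∈ Λ_i. Explicitly: (1) the F-linear map sending c_{st}^λ ↦ c_{ts}^λ for c_{st}^λ ∈ C_i is an algebra anti-automorphism of e_i A e_i; (2) for every a ∈ e_i A e_i and c_{st}^λ ∈ C_i one has a·c_{st}^λ ≡ Σ_{u∈T(λ,i)} r_a(u,s)·c_{ut}^λ mod (e_i A e_i)^{>λ}, where (e_i A e_i)^{>λ} is the F-span of {c_{uv}^{λ'} : u,v ∈ T(λ',i) for some λ' ∈ Λ_i with λ' > λ} and the coefficients r_a(u,s) do not depend on t ∈ T(λ,i). -/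
/-! By orthogonality of the `e j` and (A4), `e_i c_{ut}^λ e_i` is `c_{ut}^λ` when
`u, t ∈ T(λ,i)` and `0` otherwise. Hence `x ↦ e_i x e_i` maps `A^{>λ}` into `(e_i A e_i)^{>λ}`,
and compressing the cellular relation of `A` for `a ∈ e_i A e_i` and `s, t ∈ T(λ,i)` by it
kills exactly the terms with `u ∉ T(λ,i)`. -/

open scoped Classical

noncomputable section


namespace CellularAlgebra

variable {F : Type*} [Field F] {A : Type*} [Ring A] [Algebra F A]
  {Λ : Type*} [PartialOrder Λ] [Fintype Λ]
  {T : Λ → Type*} [∀ l, Fintype (T l)] [∀ l, Nonempty (T l)]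
  (cd : CellularAlgebra F A Λ T)

variable {I : Type*} [Fintype I] (e : I → A)

namespace Decomp

variable {cd e} {l : Λ}

theorem e_mul_c (hd : cd.Decomp e) (i : I) (u t : T l) :
    e i * cd.c l u t = if u ∈ cd.Tset e i l then cd.c l u t else 0 := by
  split_ifs with hu
  · exact hu t
  · obtain ⟨j, hj⟩ := hd.exists_idx l u
    have hji : j ≠ i := by rintro rfl; exact hu hj
    rw [← hj t, ← mul_assoc, hd.orth i j hji.symm, zero_mul]

theorem c_mul_e (hd : cd.Decomp e) (i : I) (u t : T l) :
    cd.c l u t * e i = if t ∈ cd.Tset e i l then cd.c l u t else 0 := by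
  have h := congrArg cd.star (hd.e_mul_c i t u)
  rw [cd.star_mul, hd.star_fix, cd.star_c] at h
  rw [h, apply_ite cd.star, cd.star_c, map_zero]

theorem e_mul_c_mul_e (hd : cd.Decomp e) (i : I) (u t : T l) :
    e i * cd.c l u t * e i =
      if u ∈ cd.Tset e i l ∧ t ∈ cd.Tset e i l then cd.c l u t else 0 := by
  rw [hd.e_mul_c, ite_mul, zero_mul, hd.c_mul_e, ite_and]

theorem e_mul_mul_e_mem_cornerSpanAbove (hd : cd.Decomp e) (i : I) {x : A}
    (hx : x ∈ cd.spanAbove l) : e i * x * e i ∈ cd.cornerSpanAbove e i l := by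
  let truncate : A →ₗ[F] A := LinearMap.mulRight F (e i) ∘ₗ LinearMap.mulLeft F (e i)
  suffices cd.spanAbove l ≤ (cd.cornerSpanAbove e i l).comap truncate from this hx
  refine Submodule.span_le.2 ?_
  rintro _ ⟨μ, hμ, p, q, rfl⟩
  show e i * cd.c μ p q * e i ∈ cd.cornerSpanAbove e i l
  rw [hd.e_mul_c_mul_e]
  split_ifs with hpq
  · exact Submodule.subset_span ⟨μ, hμ, p, hpq.1, q, hpq.2, rfl⟩
  · exact Submodule.zero_mem _

theorem e_mul_sum_mul_e (hd : cd.Decomp e) (i : I) {t : T l} (ht : t ∈ cd.Tset e i l)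
    (f : T l → F) :
    e i * (∑ u, f u • cd.c l u t) * e i =
      ∑ u ∈ Finset.univ.filter (fun u => u ∈ cd.Tset e i l), f u • cd.c l u t := by
  simp only [Finset.mul_sum, Finset.sum_mul, mul_smul_comm, smul_mul_assoc,
    hd.e_mul_c_mul_e, ht, and_true, smul_ite, smul_zero, Finset.sum_filter]

end Decomp

theorem c_mem_corner (hd : cd.Decomp e) {i : I} {l : Λ} {s t : T l}
    (hs : s ∈ cd.Tset e i l) (ht : t ∈ cd.Tset e i l) : cd.c l s t ∈ cd.corner e i :=
  ⟨hs t, by rw [hd.c_mul_e, if_pos ht]⟩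

omit [Fintype I] in
theorem star_mem_corner {i : I} (he : cd.star (e i) = e i) {x : A} (hx : x ∈ cd.corner e i) :
    cd.star x ∈ cd.corner e i := by
  constructor
  · rw [← he, ← cd.star_mul, hx.2]
  · rw [← he, ← cd.star_mul, hx.1]

/-- the corner algebra `e_i A e_i` is cellular with cellular basis `C_i`,
poset `Λ_i` and index sets `T(λ,i)`: the basis elements `c_{st}^λ` with `s,t ∈ T(λ,i)` lie
in `e_i A e_i`; the involution `*` (which sends `c_{st}^λ ↦ c_{ts}^λ`) restricts to an
anti-automorphism of `e_i A e_i`; and the cellular multiplication rule holds in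
`e_i A e_i` modulo `(e_i A e_i)^{>λ}`, with the same structure coefficients `r`
(independent of `t ∈ T(λ,i)`). -/
theorem statement_3 (hd : cd.Decomp e) (i : I) :
    (∀ (l : Λ) (s t : T l), s ∈ cd.Tset e i l → t ∈ cd.Tset e i l →
        cd.c l s t ∈ cd.corner e i) ∧
    (∀ x ∈ cd.corner e i, cd.star x ∈ cd.corner e i) ∧
    (∀ a ∈ cd.corner e i, ∀ (l : Λ), l ∈ cd.LambdaSet e i →
      ∀ (s t : T l), s ∈ cd.Tset e i l → t ∈ cd.Tset e i l →
      a * cd.c l s t - ∑ u ∈ Finset.univ.filter (fun u => u ∈ cd.Tset e i l),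
          cd.r a l u s • cd.c l u t ∈ cd.cornerSpanAbove e i l) := by
  refine ⟨fun l s t => cd.c_mem_corner e hd, fun x => cd.star_mem_corner e (hd.star_fix i),
    fun a ha l _ s t hs ht => ?_⟩
  have hcell := hd.e_mul_mul_e_mem_cornerSpanAbove i (cd.cell_mem a l s t)
  have hac : e i * (a * cd.c l s t) * e i = a * cd.c l s t := by
    rw [← mul_assoc, ha.1, mul_assoc, (cd.c_mem_corner e hd hs ht).2]
  rwa [mul_sub, sub_mul, hac, hd.e_mul_sum_mul_e i ht] at hcell

end CellularAlgebra
end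
end

section
/- For each i ∈ I and each λ ∈ Λ_i, one has e_i · A^{>λ} · e_i = (e_i A e_i)^{>λ}, where A^{>λ} is the F-span of all basis elements c_{uv}^μ with μ > λ, and (e_i A e_i)^{>λ} is the F-span of {c_{uv}^{λ'} : u,v ∈ T(λ',i) for some λ' ∈ Λ_i with λ' > λ}. -/
open scoped Classical

noncomputable section


namespace CellularAlgebra

variable {F : Type*} [Field F] {A : Type*} [Ring A] [Algebra F A]
  {Λ : Type*} [PartialOrder Λ] [Fintype Λ]
  {T : Λ → Type*} [∀ l, Fintype (T l)] [∀ l, Nonempty (T l)]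
  (cd : CellularAlgebra F A Λ T)

variable {I : Type*} [Fintype I] (e : I → A)

lemma c_ne_zero (μ : Λ) (p q : T μ) : cd.c μ p q ≠ 0 := by
  rw [← cd.basis_eq]
  exact cd.basis.ne_zero _

/-- The row `c μ p _` is absorbed by some `e j`; orthogonality makes every other `e i` kill it. -/
lemma e_mul_c (hd : cd.Decomp e) (i : I) (μ : Λ) (p q : T μ) :
    e i * cd.c μ p q = if p ∈ cd.Tset e i μ then cd.c μ p q else 0 := by
  obtain ⟨j, hj⟩ := hd.exists_idx μ p
  by_cases hij : i = j
  · subst hij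
    exact (hj q).trans (if_pos hj).symm
  · have hzero : e i * cd.c μ p q = 0 := by
      rw [← hj q, ← mul_assoc, hd.orth i j hij, zero_mul]
    refine hzero.trans (if_neg fun hp => cd.c_ne_zero μ p q ?_).symm
    rw [← hp q, hzero]

lemma c_mul_e (hd : cd.Decomp e) (i : I) (μ : Λ) (p q : T μ) :
    cd.c μ p q * e i = if q ∈ cd.Tset e i μ then cd.c μ p q else 0 := by
  have h := congrArg cd.star (cd.e_mul_c e hd i μ q p)
  rwa [cd.star_mul, cd.star_c, hd.star_fix, apply_ite cd.star, cd.star_c, map_zero] at h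

lemma e_mul_c_mul_e (hd : cd.Decomp e) (i : I) (μ : Λ) (p q : T μ) :
    e i * cd.c μ p q * e i =
      if p ∈ cd.Tset e i μ ∧ q ∈ cd.Tset e i μ then cd.c μ p q else 0 := by
  rw [cd.e_mul_c e hd, ite_mul, zero_mul, cd.c_mul_e e hd]
  by_cases hp : p ∈ cd.Tset e i μ <;> by_cases hq : q ∈ cd.Tset e i μ <;> simp [hp, hq]

theorem statement_4 (hd : cd.Decomp e) (i : I) (l : Λ) :
    Submodule.map (LinearMap.mulLeft F (e i) ∘ₗ LinearMap.mulRight F (e i))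
        (cd.spanAbove l) = cd.cornerSpanAbove e i l := by
  have compress (μ : Λ) (p q : T μ) :
      (LinearMap.mulLeft F (e i) ∘ₗ LinearMap.mulRight F (e i)) (cd.c μ p q) =
        if p ∈ cd.Tset e i μ ∧ q ∈ cd.Tset e i μ then cd.c μ p q else 0 := by
    simpa [mul_assoc] using cd.e_mul_c_mul_e e hd i μ p q
  rw [spanAbove, Submodule.map_span, cornerSpanAbove]
  apply le_antisymm <;> rw [Submodule.span_le]
  · rintro _ ⟨_, ⟨μ, hμ, p, q, rfl⟩, rfl⟩
    rw [compress]
    split_ifs with hpq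
    · exact Submodule.subset_span ⟨μ, hμ, p, hpq.1, q, hpq.2, rfl⟩
    · exact Submodule.zero_mem _
  · rintro _ ⟨μ, hμ, p, hp, q, hq, rfl⟩
    refine Submodule.subset_span ⟨cd.c μ p q, ⟨μ, hμ, p, q, rfl⟩, ?_⟩
    rw [compress, if_pos ⟨hp, hq⟩]

end CellularAlgebra
end
end

section
/- Let λ ∈ Λ. If s ∈ T(λ,i) and t ∈ T(λ,j) with i ≠ j, then ⟨c_s^λ, c_t^λ⟩ = 0 in Δ(λ). If s,t ∈ T(λ,i), then the value ⟨c_s^λ, c_t^λ⟩ computed in the cell module Δ(λ) of A equals the value of the bilinear form on the cell module V(λ,i) of the cellular algebra e_i A e_i. Consequently, the Gram matrix G(λ) of Δ(λ) with respect to the basis B is block diagonal: G(λ) = ⊕_{i∈I_λ} M(λ,i), where M(λ,i) is the Gram matrix of V(λ,i) with respect to the basis B_i = {c_s^λ : s ∈ T(λ,i)}. -/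
open scoped Classical

noncomputable section


namespace CellularAlgebra

variable {F : Type*} [Field F] {A : Type*} [Ring A] [Algebra F A]
  {Λ : Type*} [PartialOrder Λ] [Fintype Λ]
  {T : Λ → Type*} [∀ l, Fintype (T l)] [∀ l, Nonempty (T l)]
  (cd : CellularAlgebra F A Λ T)

variable {I : Type*} [Fintype I] (e : I → A)

/-! If `s ∈ T(λ,i)` and `t ∈ T(λ,j)`, then `c_{us} = c_{us} e_i` (apply `*` to `e_i c_{su} = c_{su}`)
and `c_{tv} = e_j c_{tv}`, so `c_{us} c_{tv}` contains the factor `e_i e_j`, which vanishes for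
`i ≠ j`. The Gram value `⟨c_s, c_t⟩` is the coefficient of `c_{uv}` in `c_{us} c_{tv}` modulo
`A^{>λ}`, well defined because `c_{uv} ∉ A^{>λ}`; as `(e_i A e_i)^{>λ} ⊆ A^{>λ}`, the corner
algebra computes the same coefficient. -/

lemma smul_c_mem_spanAbove_iff {l : Λ} {r : F} {u v : T l} :
    r • cd.c l u v ∈ cd.spanAbove l ↔ r = 0 := by
  refine ⟨fun h => ?_, fun hr => by rw [hr, zero_smul]; exact zero_mem _⟩
  by_contra hr
  have hmem : cd.c l u v ∈ cd.spanAbove l := by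
    simpa only [smul_smul, inv_mul_cancel₀ hr, one_smul] using
      Submodule.smul_mem _ r⁻¹ h
  let above : Set ((μ : Λ) × (T μ × T μ)) := {p | l < p.1}
  have hle : cd.spanAbove l ≤ Submodule.span F (cd.basis '' above) := by
    refine Submodule.span_le.2 ?_
    rintro x ⟨μ, hμ, p, q, rfl⟩
    exact Submodule.subset_span ⟨⟨μ, (p, q)⟩, hμ, cd.basis_eq μ p q⟩
  have hnot : cd.basis ⟨l, (u, v)⟩ ∉ Submodule.span F (cd.basis '' above) :=
    cd.basis.linearIndependent.notMem_span_image (lt_irrefl l)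
  exact hnot (cd.basis_eq l u v ▸ hle hmem)

lemma eq_of_sub_smul_c_mem_spanAbove {l : Λ} {x : A} {a b : F} {u v : T l}
    (ha : x - a • cd.c l u v ∈ cd.spanAbove l) (hb : x - b • cd.c l u v ∈ cd.spanAbove l) :
    a = b := by
  have hdiff : (a - b) • cd.c l u v ∈ cd.spanAbove l := by
    have := Submodule.sub_mem _ hb ha
    rwa [sub_sub_sub_cancel_left, ← sub_smul] at this
  exact sub_eq_zero.mp ((cd.smul_c_mem_spanAbove_iff).mp hdiff)

omit [Fintype I] in
lemma cornerSpanAbove_le_spanAbove (i : I) (l : Λ) :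
    cd.cornerSpanAbove e i l ≤ cd.spanAbove l := by
  refine Submodule.span_mono ?_
  rintro x ⟨μ, hμ, p, -, q, -, rfl⟩
  exact ⟨μ, hμ, p, q, rfl⟩

omit [Fintype I] in
lemma c_mul_e_of_mem_Tset {i : I} (he : cd.star (e i) = e i) {l : Λ} {t : T l}
    (ht : t ∈ cd.Tset e i l) (u : T l) : cd.c l u t * e i = cd.c l u t := by
  simpa only [cd.star_mul, he, cd.star_c] using congrArg cd.star (ht u)

lemma c_mul_c_eq_zero_of_mem_Tset (hd : cd.Decomp e) {i j : I} (hij : i ≠ j) {l : Λ}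
    {s t : T l} (hs : s ∈ cd.Tset e i l) (ht : t ∈ cd.Tset e j l) (u v : T l) :
    cd.c l u s * cd.c l t v = 0 := by
  calc cd.c l u s * cd.c l t v = cd.c l u s * (e i * e j) * cd.c l t v := by
        rw [← mul_assoc, cd.c_mul_e_of_mem_Tset e (hd.star_fix i) hs, mul_assoc, ht v]
    _ = 0 := by rw [hd.orth i j hij, mul_zero, zero_mul]

/-- for the bilinear form `⟨·,·⟩` of the cell module `Δ(λ)` (with Gram values
`φ s t = ⟨c_s^λ, c_t^λ⟩`, determined by `c_{us}^λ c_{tv}^λ ≡ φ s t • c_{uv}^λ mod A^{>λ}`)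
and the forms of the corner cell modules `V(λ,i)` (with Gram values `φi i`), one has:
`φ s t = 0` when `s ∈ T(λ,i)`, `t ∈ T(λ,j)` with `i ≠ j`; `φ s t = φi i s t` when
`s, t ∈ T(λ,i)`; hence the Gram matrix `G(λ) = (φ s t)` is block diagonal,
`G(λ) = ⊕_{i ∈ I_λ} M(λ,i)` with `M(λ,i) = (φi i s t)_{s,t ∈ T(λ,i)}`. -/
theorem statement_7 (hd : cd.Decomp e) (l : Λ)
    (φ : T l → T l → F)
    (hφ : ∀ s t u v : T l,
      cd.c l u s * cd.c l t v - φ s t • cd.c l u v ∈ cd.spanAbove l)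
    (φi : I → T l → T l → F)
    (hφi : ∀ i : I, ∀ s ∈ cd.Tset e i l, ∀ t ∈ cd.Tset e i l, ∀ u ∈ cd.Tset e i l,
      ∀ v ∈ cd.Tset e i l,
      cd.c l u s * cd.c l t v - φi i s t • cd.c l u v ∈ cd.cornerSpanAbove e i l) :
    (∀ i j : I, i ≠ j → ∀ s ∈ cd.Tset e i l, ∀ t ∈ cd.Tset e j l, φ s t = 0) ∧
    (∀ i : I, ∀ s ∈ cd.Tset e i l, ∀ t ∈ cd.Tset e i l, φ s t = φi i s t) ∧
    (∀ s t : T l, (¬ ∃ i : I, s ∈ cd.Tset e i l ∧ t ∈ cd.Tset e i l) → φ s t = 0) := by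
  have offDiagonal : ∀ i j : I, i ≠ j → ∀ s ∈ cd.Tset e i l, ∀ t ∈ cd.Tset e j l, φ s t = 0 := by
    intro i j hij s hs t ht
    refine cd.eq_of_sub_smul_c_mem_spanAbove (u := s) (v := t) (hφ s t s t) ?_
    rw [cd.c_mul_c_eq_zero_of_mem_Tset e hd hij hs ht, zero_smul, sub_zero]
    exact zero_mem _
  refine ⟨offDiagonal, ?_, ?_⟩
  · intro i s hs t ht
    exact cd.eq_of_sub_smul_c_mem_spanAbove (hφ s t s t)
      (cd.cornerSpanAbove_le_spanAbove e i l (hφi i s hs t ht s hs t ht))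
  · intro s t hst
    obtain ⟨i, hs⟩ := hd.exists_idx l s
    obtain ⟨j, ht⟩ := hd.exists_idx l t
    exact offDiagonal i j (fun hij => hst ⟨i, hs, hij ▸ ht⟩) s hs t ht

end CellularAlgebra
end
end
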